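/- Let f : I → I be a C² unimodal map with quadratic minimum at c. If f³(c) > f²(c), then the forward orbit (fᵏ(c))_{k≥0} converges to a point p ∈ I with f(p) = p and |f'(p)| ≤ 1 (a fixed attracting or parabolic sink). -/

import Mathlib

/-!
Since `f c` is the minimum of `f`, `f c ≤ f² c`; if `f² c < c`, both points would lie on the
decreasing branch and `f³ c ≤ f² c` would follow. Hence `c ≤ f² c < f³ c`, and on the
increasing branch `[f² c, b]`, which `f` maps into itself, the orbit of `f² c` is strictly
increasing. It converges to its supremum `p`, which is fixed by continuity. The orbit
approaches `p` from below with `p - fᵏ⁺¹ c ≤ p - fᵏ c`, so every difference quotient of `f`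
at `p` along the orbit lies in `[0, 1]`, and so does `f'(p)`.
-/

open Set Filter

/-- A `C²` unimodal map `f : [a,b] → [a,b]` with quadratic minimum at an interior point
`c`: `f` is `C²`, `c` is the unique critical point (`f'(c) = 0`, `f' ≠ 0` elsewhere),
`f''(c) > 0`, and `f` is strictly decreasing on `[a,c]` and strictly increasing on
`[c,b]`. -/
structure UnimodalMin (f : ℝ → ℝ) (a b c : ℝ) : Prop where
  hab : a < b
  hc : c ∈ Ioo a b
  maps : MapsTo f (Icc a b) (Icc a b)
  smooth : ContDiffOn ℝ 2 f (Icc a b)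
  crit : derivWithin f (Icc a b) c = 0
  noncrit : ∀ x ∈ Icc a b, x ≠ c → derivWithin f (Icc a b) x ≠ 0
  second : 0 < iteratedDerivWithin 2 f (Icc a b) c
  anti : StrictAntiOn f (Icc a c)
  mono : StrictMonoOn f (Icc c b)

open Topology Function

theorem StrictMonoOn.strictMono_iterate_of_lt_map {α : Type*} [Preorder α] {f : α → α}
    {s : Set α} {x : α} (hf : StrictMonoOn f s) (hs : MapsTo f s s) (hx : x ∈ s)
    (hlt : x < f x) : StrictMono fun n => f^[n] x := by
  refine strictMono_nat_of_lt_succ fun n => ?_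
  induction n with
  | zero => exact hlt
  | succ n ih =>
    have hn := hs.iterate n hx
    rw [iterate_succ_apply' f n] at ih
    rw [iterate_succ_apply' f (n + 1), iterate_succ_apply' f n]
    exact hf hn (hs hn) ih

theorem isFixedPt_of_tendsto_iterate_of_continuousWithinAt {α : Type*} [TopologicalSpace α]
    [T2Space α] {f : α → α} {s : Set α} {x p : α}
    (hp : Tendsto (fun n => f^[n] x) atTop (𝓝 p)) (hs : MapsTo f s s) (hx : x ∈ s)
    (hf : ContinuousWithinAt f s p) : IsFixedPt f p := by
  refine tendsto_nhds_unique ((tendsto_add_atTop_iff_nat 1).1 ?_) hp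
  simp only [iterate_succ' f, comp_apply]
  exact hf.tendsto.comp (tendsto_nhdsWithin_iff.2 ⟨hp, .of_forall fun n => hs.iterate n hx⟩)

theorem HasDerivWithinAt.abs_le_of_tendsto {f : ℝ → ℝ} {f' p K : ℝ} {s : Set ℝ} {u : ℕ → ℝ}
    (hf : HasDerivWithinAt f f' s p) (hu : Tendsto u atTop (𝓝[s \ {p}] p))
    (hK : ∀ n, |f (u n) - f p| ≤ K * |u n - p|) : |f'| ≤ K := by
  refine le_of_tendsto ((hasDerivWithinAt_iff_tendsto_slope.1 hf).comp hu).abs ?_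
  filter_upwards [hu.eventually self_mem_nhdsWithin] with n hn
  have hne : 0 < |u n - p| := abs_pos.2 (sub_ne_zero.2 hn.2)
  rw [comp_apply, slope_def_field, abs_div]
  exact (div_le_iff₀ hne).2 (hK n)

theorem exists_fixedPt_of_strictMono_iterate {f : ℝ → ℝ} {s : Set ℝ} {x : ℝ}
    (hs : IsClosed s) (hfs : MapsTo f s s) (hf : DifferentiableOn ℝ f s) (hx : x ∈ s)
    (hmono : StrictMono fun n => f^[n] x) (hbdd : BddAbove (range fun n => f^[n] x)) :
    ∃ p ∈ s, Tendsto (fun n => f^[n] x) atTop (𝓝 p) ∧ f p = p ∧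
      |derivWithin f s p| ≤ 1 := by
  set p := ⨆ n, f^[n] x
  have ht : Tendsto (fun n => f^[n] x) atTop (𝓝 p) := tendsto_atTop_ciSup hmono.monotone hbdd
  have hle : ∀ n, f^[n] x ≤ p := le_ciSup hbdd
  have hlt : ∀ n, f^[n] x < p := fun n => (hmono n.lt_succ_self).trans_le (hle (n + 1))
  have hp : p ∈ s := hs.mem_of_tendsto ht (.of_forall fun n => hfs.iterate n hx)
  have hfix : f p = p :=
    isFixedPt_of_tendsto_iterate_of_continuousWithinAt ht hfs hx (hf.continuousOn p hp)
  refine ⟨p, hp, ht, hfix, (hf p hp).hasDerivWithinAt.abs_le_of_tendsto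
    (tendsto_nhdsWithin_iff.2 ⟨ht, .of_forall fun n => ⟨hfs.iterate n hx, (hlt n).ne⟩⟩)
    fun n => ?_⟩
  rw [hfix, ← iterate_succ_apply' f n, one_mul, abs_of_neg (sub_neg.2 (hlt _)),
    abs_of_neg (sub_neg.2 (hlt n))]
  linarith [hmono n.lt_succ_self]

namespace UnimodalMin

variable {f : ℝ → ℝ} {a b c : ℝ}

theorem mem_Icc (h : UnimodalMin f a b c) : c ∈ Icc a b := Ioo_subset_Icc_self h.hc

theorem isMinOn (h : UnimodalMin f a b c) : IsMinOn f (Icc a b) c := by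
  intro x hx
  rcases le_total x c with hxc | hcx
  · exact h.anti.antitoneOn ⟨hx.1, hxc⟩ ⟨h.hc.1.le, le_rfl⟩ hxc
  · exact h.mono.monotoneOn ⟨le_rfl, h.hc.2.le⟩ ⟨hcx, hx.2⟩ hcx

theorem le_iterate_two_of_lt (h : UnimodalMin f a b c) (hfc : f^[2] c < f^[3] c) :
    c ≤ f^[2] c := by
  by_contra! h2
  have h1 : f c ≤ f^[2] c := h.isMinOn (h.maps h.mem_Icc)
  have hmem : ∀ k, f^[k] c ∈ Icc a b := fun k => h.maps.iterate k h.mem_Icc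
  have h3 : f^[3] c ≤ f^[2] c :=
    h.anti.antitoneOn ⟨(hmem 1).1, h1.trans h2.le⟩ ⟨(hmem 2).1, h2.le⟩ h1
  exact h3.not_gt hfc

theorem mapsTo_Icc_of_lt_map (h : UnimodalMin f a b c) {y : ℝ} (hcy : c ≤ y) (hlt : y < f y) :
    MapsTo f (Icc y b) (Icc y b) := fun _ hz =>
  ⟨hlt.le.trans (h.mono.monotoneOn ⟨hcy, hz.1.trans hz.2⟩ ⟨hcy.trans hz.1, hz.2⟩ hz.1),
    (h.maps ⟨h.hc.1.le.trans (hcy.trans hz.1), hz.2⟩).2⟩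

end UnimodalMin

/-- Lemma 6.1 iii) (sink combin): if `f³(c) > f²(c)`, then the forward orbit of `c`
converges to a fixed attracting or parabolic sink. -/
theorem stmt9 (f : ℝ → ℝ) (a b c : ℝ) (h : UnimodalMin f a b c)
    (hfc : f^[2] c < f^[3] c) :
    ∃ p ∈ Icc a b,
      Tendsto (fun k => f^[k] c) atTop (nhds p) ∧
      f p = p ∧
      |derivWithin f (Icc a b) p| ≤ 1 := by
  set y := f^[2] c
  have hy : y ∈ Icc a b := h.maps.iterate 2 h.mem_Icc
  have hcy : c ≤ y := h.le_iterate_two_of_lt hfc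
  have hlt : y < f y := by rwa [← iterate_succ_apply' f 2]
  have hmaps := h.mapsTo_Icc_of_lt_map hcy hlt
  have hyy : y ∈ Icc y b := ⟨le_rfl, hy.2⟩
  have hmono := (h.mono.mono (Icc_subset_Icc_left hcy)).strictMono_iterate_of_lt_map hmaps hyy hlt
  have hbdd : BddAbove (range fun n => f^[n] y) :=
    ⟨b, forall_mem_range.2 fun n => (hmaps.iterate n hyy).2⟩
  obtain ⟨p, hp, ht, hfix, hd⟩ := exists_fixedPt_of_strictMono_iterate isClosed_Icc h.maps
    (h.smooth.differentiableOn two_ne_zero) hy hmono hbdd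
  refine ⟨p, hp, (tendsto_add_atTop_iff_nat 2).1 ?_, hfix, hd⟩
  simpa only [iterate_add_apply] using ht
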